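/- Fix n ≥ 1 and define G_n(k) = h_n(1², 2², …, (k+1)²) as a polynomial in k. Then the coefficient of x in G_n(x) equals 2n + Σ_{i=1}^{n} B_{2i}/i. -/

import Mathlib

/-! For arbitrary weights `aᵢ`, the generating series `H_m(t) = ∑ₙ hₙ(a₀, …, a_{m-1}) tⁿ` equals
`∏_{i<m} (1 - aᵢ t)⁻¹`, so its logarithmic derivative is `∑_j p_{j+1} t^j`; comparing coefficients
in `H' = H · ∑_j p_{j+1} t^j` is Newton's identity `(n+1) h_{n+1} = ∑_{i+j=n} h_i p_{j+1}`.

For the squares, `G_n(k)` and the power sums `S_j(k) = ∑_{i=1}^{k+1} i^{2j}` are polynomials in `k`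
with constant term `1`, and by Faulhaber's formula `S_j'(0) = B_{2j}(2) = B_{2j} + 2j`.
Reading Newton's identity off at the linear coefficients `cₙ` of `Gₙ` gives
`(n+1) c_{n+1} = ∑_{i+j=n} (c_i + B_{2j+2} + 2j + 2)`, and subtracting two consecutive instances
leaves `c_{n+1} = cₙ + 2 + B_{2n+2}/(n+1)`. -/

open scoped Classical

/-- The complete homogeneous symmetric polynomial of degree `n` evaluated at the squares
`1², 2², …, m²`, i.e. `∑_{1 ≤ z₁ ≤ ⋯ ≤ z_n ≤ m} z₁² ⋯ z_n²`. -/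
noncomputable def hSq (n m : ℕ) : ℚ :=
  ∑ f ∈ Finset.univ.filter (fun f : Fin n → Fin m => Monotone f), ∏ i, ((f i : ℚ) + 1) ^ 2

open Finset

theorem Fin.monotone_snoc_last {n m : ℕ} {g : Fin n → Fin (m + 1)} (hg : Monotone g) :
    Monotone (Fin.snoc g (Fin.last m) : Fin (n + 1) → Fin (m + 1)) := by
  intro i j hij
  rcases Fin.eq_castSucc_or_eq_last j with ⟨j, rfl⟩ | rfl
  · rcases Fin.eq_castSucc_or_eq_last i with ⟨i, rfl⟩ | rfl
    · simpa using hg (Fin.castSucc_le_castSucc_iff.mp hij)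
    · exact absurd hij (not_le.mpr (Fin.castSucc_lt_last j))
  · simpa using Fin.le_last _

namespace PowerSeries

theorem mk_pow_mul_one_sub {R : Type*} [CommRing R] (x : R) : mk (x ^ ·) * (1 - C x * X) = 1 := by
  simpa [rescale_mk] using congrArg (rescale x) (mk_one_mul_one_sub_eq_one (S := R))

theorem derivative_mk_pow {R : Type*} [CommSemiring R] (x : R) :
    d⁄dX R (mk (x ^ ·)) = C x * mk (x ^ ·) ^ 2 := by
  ext n
  rw [coeff_derivative, coeff_C_mul, pow_two, coeff_mul, coeff_mk]
  simp only [coeff_mk]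
  rw [sum_congr rfl fun q hq => by rw [← pow_add, mem_antidiagonal.mp hq], sum_const,
    Nat.card_antidiagonal, nsmul_eq_mul]
  push_cast
  ring

end PowerSeries

section CompleteHomogeneous

variable {R : Type*} [CommSemiring R] (a : ℕ → R)

noncomputable def completeHomogeneous (n m : ℕ) : R :=
  ∑ f ∈ univ.filter (fun f : Fin n → Fin m => Monotone f), ∏ i, a (f i)

def powerSum (j m : ℕ) : R := ∑ i ∈ range m, a i ^ j

theorem completeHomogeneous_zero_left (m : ℕ) : completeHomogeneous a 0 m = 1 := by
  simp [completeHomogeneous, Monotone]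

theorem completeHomogeneous_succ_zero (n : ℕ) : completeHomogeneous a (n + 1) 0 = 0 := by
  simp [completeHomogeneous, univ_eq_empty]

theorem sum_monotone_of_apply_last_eq (n m : ℕ) :
    ∑ f ∈ (univ.filter (fun f : Fin (n + 1) → Fin (m + 1) => Monotone f)).filter
      (fun f => f (Fin.last n) = Fin.last m), ∏ i, a (f i) =
    a m * completeHomogeneous a n (m + 1) := by
  rw [completeHomogeneous, mul_sum]
  refine sum_nbij' Fin.init (fun g => Fin.snoc g (Fin.last m)) ?_ ?_ ?_ ?_ ?_
  · simp only [mem_filter, mem_univ, true_and]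
    exact fun f hf => hf.1.comp Fin.strictMono_castSucc.monotone
  · simp only [mem_filter, mem_univ, true_and, Fin.snoc_last, and_true]
    exact fun g hg => Fin.monotone_snoc_last hg
  · simp only [mem_filter, mem_univ, true_and]
    intro f hf
    simp [← hf.2]
  · intro g _
    exact Fin.init_snoc _ _
  · simp only [mem_filter, mem_univ, true_and]
    intro f hf
    rw [Fin.prod_univ_castSucc, hf.2, Fin.val_last, mul_comm]
    rfl

theorem sum_monotone_of_apply_last_ne (n m : ℕ) :
    ∑ f ∈ (univ.filter (fun f : Fin (n + 1) → Fin (m + 1) => Monotone f)).filter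
      (fun f => f (Fin.last n) ≠ Fin.last m), ∏ i, a (f i) =
    completeHomogeneous a (n + 1) m := by
  have ne_last {f : Fin (n + 1) → Fin (m + 1)} (hf : Monotone f ∧ f (Fin.last n) ≠ Fin.last m)
      (k : Fin (n + 1)) : f k ≠ Fin.last m :=
    fun h => hf.2 (Fin.last_le_iff.mp (h ▸ hf.1 (Fin.le_last k)))
  rw [completeHomogeneous]
  refine sum_bij' (fun f hf k => (f k).castPred (ne_last (by simpa using hf) k))
    (fun g _ => Fin.castSucc ∘ g) ?_ ?_ ?_ ?_ ?_
  · simp only [mem_filter, mem_univ, true_and]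
    exact fun f hf i j hij => Fin.castPred_le_castPred_iff.mpr (hf.1 hij)
  · simp only [mem_filter, mem_univ, true_and]
    exact fun g hg => ⟨Fin.strictMono_castSucc.monotone.comp hg, (Fin.castSucc_lt_last _).ne⟩
  · intro f _
    funext k
    simp
  · intro g _
    funext k
    simp
  · intro f _
    simp

theorem completeHomogeneous_succ_succ (n m : ℕ) :
    completeHomogeneous a (n + 1) (m + 1) =
      completeHomogeneous a (n + 1) m + a m * completeHomogeneous a n (m + 1) := by
  rw [completeHomogeneous, ← sum_filter_not_add_sum_filter _ (fun f => f (Fin.last n) = Fin.last m),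
    sum_monotone_of_apply_last_eq, sum_monotone_of_apply_last_ne]

theorem completeHomogeneous_succ_left (n m : ℕ) :
    completeHomogeneous a (n + 1) m = ∑ t ∈ range m, a t * completeHomogeneous a n (t + 1) := by
  induction m with
  | zero => exact completeHomogeneous_succ_zero a n
  | succ m ih => rw [completeHomogeneous_succ_succ, ih, sum_range_succ]

end CompleteHomogeneous

section GeneratingSeries

open PowerSeries

variable {R : Type*} [CommRing R] (a : ℕ → R)

noncomputable def completeHomogeneousSeries (m : ℕ) : R⟦X⟧ :=
  mk fun n => completeHomogeneous a n m

noncomputable def powerSumSeries (m : ℕ) : R⟦X⟧ :=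
  mk fun j => powerSum a (j + 1) m

theorem completeHomogeneousSeries_zero : completeHomogeneousSeries a 0 = 1 := by
  ext (_ | n) <;> simp [completeHomogeneousSeries, completeHomogeneous_zero_left,
    completeHomogeneous_succ_zero, coeff_one]

theorem completeHomogeneousSeries_succ (m : ℕ) :
    completeHomogeneousSeries a (m + 1) = completeHomogeneousSeries a m * mk (a m ^ ·) := by
  set H := completeHomogeneousSeries a (m + 1)
  have hrec : H = completeHomogeneousSeries a m + C (a m) * X * H := by
    ext (_ | n) <;> simp [H, completeHomogeneousSeries, completeHomogeneous_zero_left,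
      completeHomogeneous_succ_succ, mul_assoc, coeff_succ_X_mul]
  linear_combination (-H) * mk_pow_mul_one_sub (a m) + mk (a m ^ ·) * hrec

theorem powerSumSeries_succ (m : ℕ) :
    powerSumSeries a (m + 1) = powerSumSeries a m + C (a m) * mk (a m ^ ·) := by
  ext j
  simp [powerSumSeries, powerSum, sum_range_succ, pow_succ']

theorem derivative_completeHomogeneousSeries (m : ℕ) :
    d⁄dX R (completeHomogeneousSeries a m) =
      completeHomogeneousSeries a m * powerSumSeries a m := by
  induction m with
  | zero =>
    rw [completeHomogeneousSeries_zero, derivative_one, one_mul]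
    ext j
    simp [powerSumSeries, powerSum]
  | succ m ih =>
    rw [completeHomogeneousSeries_succ, powerSumSeries_succ, Derivation.leibniz, ih,
      derivative_mk_pow, smul_eq_mul, smul_eq_mul]
    ring

theorem succ_mul_completeHomogeneous (n m : ℕ) :
    (n + 1) * completeHomogeneous a (n + 1) m =
      ∑ q ∈ antidiagonal n, completeHomogeneous a q.1 m * powerSum a (q.2 + 1) m := by
  simpa [completeHomogeneousSeries, powerSumSeries, coeff_derivative, coeff_mul, mul_comm]
    using congrArg (coeff n) (derivative_completeHomogeneousSeries a m)

theorem completeHomogeneous_one_right (n : ℕ) : completeHomogeneous a n 1 = a 0 ^ n := by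
  have h := congrArg (coeff n) (completeHomogeneousSeries_succ a 0)
  rwa [completeHomogeneousSeries_zero, one_mul, coeff_mk, completeHomogeneousSeries,
    coeff_mk] at h

end GeneratingSeries

section Faulhaber

open Polynomial

theorem Polynomial.eq_of_eval_natCast_eq {R : Type*} [CommRing R] [IsDomain R] [CharZero R]
    {P Q : R[X]} (h : ∀ k : ℕ, P.eval (k : R) = Q.eval (k : R)) : P = Q :=
  eq_of_infinite_eval_eq P Q (Set.infinite_of_injective_forall_mem Nat.cast_injective h)

noncomputable def faulhaber (p : ℕ) : ℚ[X] :=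
  C ((p : ℚ) + 1)⁻¹ * (Polynomial.bernoulli (p + 1) - C (_root_.bernoulli (p + 1)))

theorem faulhaber_eval (p n : ℕ) : (faulhaber p).eval (n : ℚ) = ∑ k ∈ range n, (k : ℚ) ^ p := by
  have hp : ((p : ℚ) + 1) ≠ 0 := by positivity
  simp only [faulhaber, eval_mul, eval_C, eval_sub, ← sum_range_pow_eq_bernoulli_sub,
    inv_mul_cancel_left₀ hp]

theorem derivative_faulhaber (p : ℕ) : derivative (faulhaber p) = Polynomial.bernoulli p := by
  have hp : ((p : ℚ) + 1) ≠ 0 := by positivity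
  rw [faulhaber, derivative_C_mul, derivative_sub, derivative_C, sub_zero,
    derivative_bernoulli_add_one, ← mul_assoc, show ((p : ℚ[X]) + 1) = C ((p : ℚ) + 1) by simp,
    ← C_mul, inv_mul_cancel₀ hp, C_1, one_mul]

theorem exists_eval_eq_sum_range (Q : ℚ[X]) :
    ∃ A : ℚ[X], ∀ k : ℕ, A.eval (k : ℚ) = ∑ i ∈ range k, Q.eval (i : ℚ) := by
  induction Q using Polynomial.induction_on' with
  | add P Q hP hQ =>
    obtain ⟨A, hA⟩ := hP
    obtain ⟨B, hB⟩ := hQ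
    exact ⟨A + B, fun k => by simp [hA, hB, sum_add_distrib]⟩
  | monomial p c => exact ⟨C c * faulhaber p, fun k => by simp [faulhaber_eval, mul_sum]⟩

end Faulhaber

theorem eq_add_sum_div_of_succ_mul_eq {K : Type*} [Field K] [CharZero K] {c d : ℕ → K}
    (h : ∀ n, (n + 1) * c (n + 1) = ∑ q ∈ antidiagonal n, (c q.1 + d (q.2 + 1))) (n : ℕ) :
    c n = c 0 + ∑ i ∈ Icc 1 n, d i / i := by
  have h' (n : ℕ) : n * c n = ∑ k ∈ range n, (c k + d (k + 1)) := by
    cases n with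
    | zero => simp
    | succ n =>
      push_cast
      rw [h, sum_add_distrib, ← Nat.sum_antidiagonal_swap (f := fun q => d (q.2 + 1)),
        Nat.sum_antidiagonal_eq_sum_range_succ_mk, Nat.sum_antidiagonal_eq_sum_range_succ_mk,
        sum_add_distrib]
      rfl
  have step (n : ℕ) : c (n + 1) = c n + d (n + 1) / (n + 1) := by
    have := h' (n + 1)
    rw [sum_range_succ, ← h'] at this
    field_simp
    push_cast at this
    linear_combination this
  induction n with
  | zero => simp
  | succ n ih => rw [step, ih, sum_Icc_succ_top (Nat.le_add_left 1 n)]; push_cast; ring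

section SquareWeights

open Polynomial

theorem hSq_eq_completeHomogeneous (n m : ℕ) :
    hSq n m = completeHomogeneous (fun i : ℕ => ((i : ℚ) + 1) ^ 2) n m := rfl

theorem exists_eval_eq_hSq (n : ℕ) : ∃ P : ℚ[X], ∀ k : ℕ, P.eval (k : ℚ) = hSq n (k + 1) := by
  induction n with
  | zero => exact ⟨1, fun k => by simp [hSq_eq_completeHomogeneous, completeHomogeneous_zero_left]⟩
  | succ n ih =>
    obtain ⟨P, hP⟩ := ih
    obtain ⟨A, hA⟩ := exists_eval_eq_sum_range ((X + 1) ^ 2 * P)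
    refine ⟨taylor 1 A, fun k => ?_⟩
    rw [taylor_eval, ← Nat.cast_succ, hA, hSq_eq_completeHomogeneous, completeHomogeneous_succ_left]
    simp [hP, hSq_eq_completeHomogeneous]

noncomputable def squarePowerSumPoly (j : ℕ) : ℚ[X] := taylor 2 (faulhaber (2 * (j + 1)))

theorem squarePowerSumPoly_eval (j k : ℕ) :
    (squarePowerSumPoly j).eval (k : ℚ) =
      powerSum (fun i : ℕ => ((i : ℚ) + 1) ^ 2) (j + 1) (k + 1) := by
  rw [squarePowerSumPoly, taylor_eval, show (k : ℚ) + 2 = ((k + 2 : ℕ) : ℚ) by norm_num,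
    faulhaber_eval, sum_range_succ']
  simp [powerSum, ← pow_mul]

theorem squarePowerSumPoly_coeff_zero (j : ℕ) : (squarePowerSumPoly j).coeff 0 = 1 := by
  rw [coeff_zero_eq_eval_zero, ← Nat.cast_zero, squarePowerSumPoly_eval]
  simp [powerSum]

theorem squarePowerSumPoly_coeff_one (j : ℕ) :
    (squarePowerSumPoly j).coeff 1 = bernoulli' (2 * (j + 1)) + 2 * ((j + 1 : ℕ) : ℚ) := by
  have h := bernoulli_eval_one_add (2 * (j + 1)) 1
  rw [one_add_one_eq_two, bernoulli_eval_one, one_pow, mul_one] at h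
  rw [squarePowerSumPoly, taylor_coeff_one, derivative_faulhaber, h, Nat.cast_mul, Nat.cast_two]

theorem succ_mul_coeff_one_eq_sum (P : ℕ → ℚ[X])
    (hP : ∀ n k : ℕ, (P n).eval (k : ℚ) = hSq n (k + 1)) (n : ℕ) :
    (n + 1) * (P (n + 1)).coeff 1 = ∑ q ∈ antidiagonal n,
      ((P q.1).coeff 1 + (bernoulli' (2 * (q.2 + 1)) + 2 * ((q.2 + 1 : ℕ) : ℚ))) := by
  have hP_coeff_zero (j : ℕ) : (P j).coeff 0 = 1 := by
    rw [coeff_zero_eq_eval_zero, ← Nat.cast_zero, hP, zero_add, hSq_eq_completeHomogeneous,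
      completeHomogeneous_one_right]
    norm_num
  have newton : C ((n : ℚ) + 1) * P (n + 1) =
      ∑ q ∈ antidiagonal n, P q.1 * squarePowerSumPoly q.2 := by
    refine eq_of_eval_natCast_eq fun k => ?_
    simp only [eval_mul, eval_C, eval_finsetSum, hP, squarePowerSumPoly_eval,
      hSq_eq_completeHomogeneous]
    exact succ_mul_completeHomogeneous _ n (k + 1)
  have h := congrArg (coeff · 1) newton
  simp only [coeff_C_mul, finsetSum_coeff] at h
  simpa [mul_coeff_one, hP_coeff_zero, squarePowerSumPoly_coeff_zero,
    squarePowerSumPoly_coeff_one, add_comm] using h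

end SquareWeights

theorem stmt_19_general (n : ℕ) (G : Polynomial ℚ)
    (hval : ∀ k : ℕ, G.eval (k : ℚ) = hSq n (k + 1)) :
    G.coeff 1 = 2 * (n : ℚ) + ∑ i ∈ Finset.Icc 1 n, bernoulli' (2 * i) / i := by
  choose P hP using exists_eval_eq_hSq
  have hG : G = P n := Polynomial.eq_of_eval_natCast_eq fun k => (hval k).trans (hP n k).symm
  have hP_zero : P 0 = 1 := Polynomial.eq_of_eval_natCast_eq fun k => by
    simp [hP, hSq_eq_completeHomogeneous, completeHomogeneous_zero_left]
  have hsplit (i : ℕ) (hi : i ∈ Icc 1 n) :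
      (bernoulli' (2 * i) + 2 * (i : ℚ)) / i = bernoulli' (2 * i) / i + 2 := by
    have : (i : ℚ) ≠ 0 := Nat.cast_ne_zero.mpr (Nat.one_le_iff_ne_zero.mp (mem_Icc.mp hi).1)
    field_simp
  have hsolve := eq_add_sum_div_of_succ_mul_eq (c := fun n => (P n).coeff 1)
    (d := fun i => bernoulli' (2 * i) + 2 * (i : ℚ)) (succ_mul_coeff_one_eq_sum P hP) n
  rw [hG, hsolve, hP_zero, Polynomial.coeff_one, if_neg one_ne_zero, zero_add,
    sum_congr rfl hsplit, sum_add_distrib, sum_const, Nat.card_Icc, nsmul_eq_mul]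
  push_cast
  ring

theorem stmt_19 (n : ℕ) (hn : 0 < n) (G : Polynomial ℚ)
    (hval : ∀ k : ℕ, G.eval (k : ℚ) = hSq n (k + 1)) :
    G.coeff 1 = 2 * (n : ℚ) + ∑ i ∈ Finset.Icc 1 n, bernoulli' (2 * i) / i :=
  stmt_19_general n G hval
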